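/- Let k be a finite field of characteristic ℓ, V a finite dimensional k-vector space, and G ≤ GL(V) a normal subgroup of a group G' ≤ GL(V) with index [G':G] prime to ℓ. If G is big (satisfies conditions (B1)–(B4)), then G' is big. -/

import Mathlib

/-!
(B2) and (B4) pass from `G` to every overgroup `G'`: a `G'`-stable subspace is `G`-stable, and a
nonzero `G'`-stable subspace of `ad V` contains an irreducible `G`-submodule. For (B1), a quotient
`Q` of `G'` of `ℓ`-power order kills `G`, so `|Q|` divides `[G' : G]`, which is prime to `ℓ`.
For (B3), after subtracting a coboundary a cocycle `c` on `G'` vanishes on `G`, hence is constant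
on the cosets `xG`; summing `c (g x) = c g + g • c x` over coset representatives `x` gives
`n • c g = S - g • S` with `n = [G' : G]` invertible in `k`, so `c` is the coboundary of `-S / n`.
-/

open Module

variable (k V : Type*)

section Defs
variable [Field k] [AddCommGroup V] [Module k V]

/-- Conjugation action of `GL(V)` on `ad V = End(V)`. -/
def conjAd (g : (V →ₗ[k] V)ˣ) (f : V →ₗ[k] V) : V →ₗ[k] V :=
  (g : V →ₗ[k] V) * f * ((g⁻¹ : (V →ₗ[k] V)ˣ) : V →ₗ[k] V)

/-- The generalized eigenspace `V_{g,α}`. -/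
def GenEig (g : V →ₗ[k] V) (α : k) : Submodule k V :=
  Module.End.maxGenEigenspace g α

/-- The canonical complement of `V_{g,α}`, the kernel of the projection `V ↠ V_{g,α}`. -/
noncomputable def CoGenEig (g : V →ₗ[k] V) (α : k) : Submodule k V :=
  LinearMap.range ((g - α • 1) ^ Module.finrank k V)

/-- `W ⊆ End(V)` is stable under conjugation by elements of `G`. -/
def ConjStable (G : Subgroup (V →ₗ[k] V)ˣ) (W : Submodule k (V →ₗ[k] V)) : Prop :=
  ∀ g ∈ G, ∀ f ∈ W, conjAd k V g f ∈ W

/-- `W` is an irreducible `G`-submodule of `ad V = End(V)` (conjugation action). -/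
def IsIrredAdSub (G : Subgroup (V →ₗ[k] V)ˣ) (W : Submodule k (V →ₗ[k] V)) : Prop :=
  W ≠ ⊥ ∧ ConjStable k V G W ∧
    ∀ W' ≤ W, ConjStable k V G W' → W' = ⊥ ∨ W' = W

/-- Condition (B2): `V` is absolutely irreducible as a `G`-module. -/
def AbsIrred (G : Subgroup (V →ₗ[k] V)ˣ) : Prop :=
  (⊥ : Submodule k V) ≠ ⊤ ∧
  (∀ U : Submodule k V, (∀ g ∈ G, ∀ v ∈ U, (g : V →ₗ[k] V) v ∈ U) → U = ⊥ ∨ U = ⊤) ∧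
  (∀ f : V →ₗ[k] V, (∀ g ∈ G, (g : V →ₗ[k] V) * f = f * (g : V →ₗ[k] V)) →
    ∃ c : k, f = c • 1)

/-- Condition (B3): `H¹(G, ad⁰V) = 0`, stated via 1-cocycles and 1-coboundaries for the
conjugation action on traceless endomorphisms. -/
def H1AdZeroVanishes (G : Subgroup (V →ₗ[k] V)ˣ) : Prop :=
  ∀ c : G → (V →ₗ[k] V),
    (∀ g : G, LinearMap.trace k V (c g) = 0) →
    (∀ g h : G, c (g * h) = c g + conjAd k V (g : (V →ₗ[k] V)ˣ) (c h)) →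
    ∃ f : V →ₗ[k] V, LinearMap.trace k V f = 0 ∧
      ∀ g : G, c g = conjAd k V (g : (V →ₗ[k] V)ˣ) f - f

/-- Condition (B4). -/
def B4 (G : Subgroup (V →ₗ[k] V)ˣ) : Prop :=
  ∀ W : Submodule k (V →ₗ[k] V), IsIrredAdSub k V G W →
    ∃ g ∈ G, ∃ α : k, ∃ f ∈ W,
      Module.finrank k (GenEig k V (g : V →ₗ[k] V) α) = 1 ∧
      ∃ v ∈ GenEig k V (g : V →ₗ[k] V) α, f v ∉ CoGenEig k V (g : V →ₗ[k] V) α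

end Defs

section Defs2
variable [Field k] [AddCommGroup V] [Module k V]

/-- Condition (B1): `G` has no nontrivial quotient of `ℓ`-power order. -/
def B1 (ℓ : ℕ) (G : Subgroup (V →ₗ[k] V)ˣ) : Prop :=
  ∀ (Q : Type) [Group Q] (φ : G →* Q), Function.Surjective φ → IsPGroup ℓ Q →
    Subsingleton Q

/-- `G` is a big subgroup of `GL(V)`: conditions (B1)–(B4). -/
def IsBig (ℓ : ℕ) (G : Subgroup (V →ₗ[k] V)ˣ) : Prop :=
  B1 k V ℓ G ∧ AbsIrred k V G ∧ H1AdZeroVanishes k V G ∧ B4 k V G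

end Defs2

namespace Representation

variable {k K M : Type*} [Field k] [Group K] [AddCommGroup M] [Module k M]
  (ρ : Representation k K M) {H : Subgroup K} {c : K → M}

theorem cocycle_out_mk_eq (hc : ∀ g h, c (g * h) = c g + ρ g (c h))
    (hH : ∀ h ∈ H, c h = 0) (x : K) : c (QuotientGroup.mk x : K ⧸ H).out = c x := by
  obtain ⟨h, hx⟩ := QuotientGroup.mk_out_eq_mul H x
  rw [hx, hc, hH h h.2, map_zero, add_zero]

theorem exists_coboundary_eq_of_eq_zero_on_subgroup (hn : (H.index : k) ≠ 0)
    (hc : ∀ g h, c (g * h) = c g + ρ g (c h)) (hH : ∀ h ∈ H, c h = 0) :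
    ∃ m ∈ Submodule.span k (Set.range c), ∀ g, c g = ρ g m - m := by
  have : H.FiniteIndex := ⟨fun h ↦ hn (by rw [h, Nat.cast_zero])⟩
  have := Fintype.ofFinite (K ⧸ H)
  set S := ∑ q : K ⧸ H, c q.out
  have hS : ∀ g, S = H.index • c g + ρ g S := fun g ↦
    calc S = ∑ q : K ⧸ H, c (g • q).out := (Equiv.sum_comp (MulAction.toPerm g) _).symm
      _ = ∑ q : K ⧸ H, (c g + ρ g (c q.out)) := by
        refine Finset.sum_congr rfl fun q _ ↦ ?_
        rw [← hc, ← cocycle_out_mk_eq ρ hc hH (g * q.out)]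
        have hq : g • q = QuotientGroup.mk (g * q.out) := by
          conv_lhs => rw [← QuotientGroup.out_eq' q]
          rfl
        rw [hq]
      _ = H.index • c g + ρ g S := by
        rw [Finset.sum_add_distrib, Finset.sum_const, Finset.card_univ, map_sum,
          H.index_eq_card, Nat.card_eq_fintype_card]
  refine ⟨-(H.index : k)⁻¹ • S, ?_, fun g ↦ ?_⟩
  · exact Submodule.smul_mem _ _
      (Submodule.sum_mem _ fun q _ ↦ Submodule.subset_span ⟨q.out, rfl⟩)
  · have := congrArg ((H.index : k)⁻¹ • ·) (eq_sub_of_add_eq (hS g).symm)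
    simp only [← Nat.cast_smul_eq_nsmul k, smul_smul, inv_mul_cancel₀ hn, one_smul] at this
    rw [this, map_smul]
    module

end Representation

theorem IsPGroup.subsingleton_of_le_ker {ℓ : ℕ} [Fact ℓ.Prime] {K Q : Type*} [Group K] [Group Q]
    (hQ : IsPGroup ℓ Q) {φ : K →* Q} (hφ : Function.Surjective φ) {H : Subgroup K}
    (hH : H ≤ φ.ker) (hindex : ¬ ℓ ∣ H.index) : Subsingleton Q := by
  have hcard : Nat.card Q ∣ H.index :=
    Nat.card_congr (QuotientGroup.quotientKerEquivOfSurjective φ hφ).toEquiv ▸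
      Subgroup.index_dvd_of_le hH
  rcases hQ.card_eq_or_dvd with h | h
  · exact (Nat.card_eq_one_iff_unique.mp h).1
  · exact absurd (h.trans hcard) hindex

section GeneralLinear

variable {k V : Type*} [Field k] [AddCommGroup V] [Module k V] {G G' : Subgroup (V →ₗ[k] V)ˣ}

lemma trace_conjAd [FiniteDimensional k V] (g : (V →ₗ[k] V)ˣ) (f : V →ₗ[k] V) :
    LinearMap.trace k V (conjAd k V g f) = LinearMap.trace k V f := by
  rw [conjAd, LinearMap.trace_mul_cycle, Units.inv_mul, one_mul]

variable (k V) in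
def conjRep (G : Subgroup (V →ₗ[k] V)ˣ) : Representation k G (V →ₗ[k] V) where
  toFun g := LinearMap.mulLeft k ↑(g : (V →ₗ[k] V)ˣ) ∘ₗ LinearMap.mulRight k ↑(g : (V →ₗ[k] V)ˣ)⁻¹
  map_one' := by ext; simp
  map_mul' g h := by ext; simp [mul_assoc]

@[simp]
lemma conjRep_apply (g : G) (f : V →ₗ[k] V) : conjRep k V G g f = conjAd k V g f := by
  simp [conjRep, conjAd, mul_assoc]

lemma ConjStable.mono {W : Submodule k (V →ₗ[k] V)} (hle : G ≤ G') (h : ConjStable k V G' W) :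
    ConjStable k V G W :=
  fun g hg ↦ h g (hle hg)

lemma exists_isIrredAdSub_le [FiniteDimensional k V] {W : Submodule k (V →ₗ[k] V)} (hW : W ≠ ⊥)
    (hst : ConjStable k V G W) : ∃ W₀ ≤ W, IsIrredAdSub k V G W₀ := by
  obtain ⟨W₀, ⟨hW₀W, hW₀, hst₀⟩, hmin⟩ := wellFounded_lt.has_min
    {W' | W' ≤ W ∧ W' ≠ ⊥ ∧ ConjStable k V G W'} ⟨W, le_rfl, hW, hst⟩
  refine ⟨W₀, hW₀W, hW₀, hst₀, fun W' hW' hst' ↦ ?_⟩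
  by_contra! hne
  exact hmin W' ⟨hW'.trans hW₀W, hne.1, hst'⟩ (lt_of_le_of_ne hW' hne.2)

lemma AbsIrred.mono (hle : G ≤ G') (h : AbsIrred k V G) : AbsIrred k V G' :=
  ⟨h.1, fun U hU ↦ h.2.1 U fun g hg ↦ hU g (hle hg), fun f hf ↦ h.2.2 f fun g hg ↦ hf g (hle hg)⟩

lemma B4.mono [FiniteDimensional k V] (hle : G ≤ G') (h : B4 k V G) : B4 k V G' := by
  intro W ⟨hW, hst, _⟩
  obtain ⟨W₀, hW₀W, hW₀⟩ := exists_isIrredAdSub_le hW (hst.mono hle)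
  obtain ⟨g, hg, α, f, hf, hrank, hv⟩ := h W₀ hW₀
  exact ⟨g, hle hg, α, f, hW₀W hf, hrank, hv⟩

lemma B1.eq_one {ℓ : ℕ} (h : B1 k V ℓ G) {Q : Type} [Group Q] (hQ : IsPGroup ℓ Q) (φ : G →* Q)
    (g : G) : φ g = 1 := by
  have := h φ.range φ.rangeRestrict φ.rangeRestrict_surjective (hQ.to_subgroup φ.range)
  exact congrArg Subtype.val (Subsingleton.elim (φ.rangeRestrict g) 1)

lemma B1.mono_of_not_dvd_relIndex {ℓ : ℕ} [Fact ℓ.Prime] (hle : G ≤ G')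
    (hindex : ¬ ℓ ∣ G.relIndex G') (h : B1 k V ℓ G) : B1 k V ℓ G' := by
  intro Q _ φ hφ hQ
  refine hQ.subsingleton_of_le_ker hφ (H := G.subgroupOf G') (fun x hx ↦ ?_) hindex
  exact h.eq_one hQ (φ.comp (Subgroup.inclusion hle)) ⟨x, hx⟩

lemma H1AdZeroVanishes.mono_of_relIndex_ne_zero [FiniteDimensional k V] (hle : G ≤ G')
    (hindex : (G.relIndex G' : k) ≠ 0) (h : H1AdZeroVanishes k V G) : H1AdZeroVanishes k V G' := by
  intro c htr hc
  obtain ⟨f, hf, hcf⟩ := h (c ∘ Subgroup.inclusion hle) (fun g ↦ htr _)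
    fun g h ↦ hc (Subgroup.inclusion hle g) (Subgroup.inclusion hle h)
  set c₁ : G' → V →ₗ[k] V := fun g ↦ c g - (conjRep k V G' g f - f)
  have hc₁ : ∀ g h, c₁ (g * h) = c₁ g + conjRep k V G' g (c₁ h) := by
    intro g h
    simp only [c₁, hc g h, ← conjRep_apply, map_mul, Module.End.mul_apply, map_sub]
    abel
  obtain ⟨m, hm, hcm⟩ := (conjRep k V G').exists_coboundary_eq_of_eq_zero_on_subgroup hindex hc₁
    fun g hg ↦ sub_eq_zero.mpr (by rw [conjRep_apply]; exact hcf ⟨g, hg⟩)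
  have htr_m : m ∈ LinearMap.ker (LinearMap.trace k V) := by
    refine Submodule.span_le.mpr ?_ hm
    rintro _ ⟨g, rfl⟩
    simp [c₁, htr, trace_conjAd]
  refine ⟨f + m, by rw [map_add, hf, LinearMap.mem_ker.mp htr_m, add_zero], fun g ↦ ?_⟩
  have hcm_g := hcm g
  rw [sub_eq_iff_eq_add] at hcm_g
  rw [← conjRep_apply, map_add, hcm_g]
  abel

end GeneralLinear

theorem stmt1 {ℓ : ℕ} [Fact ℓ.Prime]
    [Field k] [CharP k ℓ]
    [AddCommGroup V] [Module k V] [FiniteDimensional k V]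
    (G G' : Subgroup (V →ₗ[k] V)ˣ) (hle : G ≤ G')
    (hindex : ¬ (ℓ ∣ Subgroup.relIndex G G'))
    (hbig : IsBig k V ℓ G) :
    IsBig k V ℓ G' := by
  obtain ⟨hB1, hB2, hB3, hB4⟩ := hbig
  have hindex_ne_zero : (G.relIndex G' : k) ≠ 0 := by rwa [Ne, CharP.cast_eq_zero_iff k ℓ]
  exact ⟨hB1.mono_of_not_dvd_relIndex hle hindex, hB2.mono hle,
    hB3.mono_of_relIndex_ne_zero hle hindex_ne_zero, hB4.mono hle⟩
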